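/- arXiv:1610.07559 — 2 statements merged into one kernel-verified Lean document; each statement's English description precedes it below -/
import Mathlib

section
/- The bottleneck shortest path (minimax path) computed by Dijkstra's algorithm with relaxation d(v) := min(d(v), max(d(u), w(u,v))) is optimal: in a finite directed graph with nonnegative edge weights, the algorithm computes for each vertex the minimum over all paths from the source of the maximum edge weight along the path. -/
open scoped ENNReal

variable {V : Type*}

/-- Bottleneck cost of a path (given as a list of vertices): the maximum weight
of its edges, `0` for a trivial path.  Missing edges have weight `∞`. -/
def bottleneckCost (w : V → V → ℝ≥0∞) : List V → ℝ≥0∞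
  | [] => 0
  | [_] => 0
  | a :: b :: rest => max (w a b) (bottleneckCost w (b :: rest))

/-- One run of Dijkstra's algorithm with the modified relaxation
`d(v) := min (d v) (max (d u) (w u v))`: repeatedly extract an unvisited vertex
of minimum tentative cost and relax its outgoing edges. -/
noncomputable def bottleneckDijkstra [DecidableEq V] (w : V → V → ℝ≥0∞) :
    Finset V → (V → ℝ≥0∞) → (V → ℝ≥0∞)
  | U, d =>
    if h : U.Nonempty then
      have hu := (Finset.exists_min_image U d h).choose_spec.1
      bottleneckDijkstra w (U.erase (Finset.exists_min_image U d h).choose)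
        (fun v => min (d v)
          (max (d (Finset.exists_min_image U d h).choose)
               (w (Finset.exists_min_image U d h).choose v)))
    else d
  termination_by U _ => U.card
  decreasing_by exact Finset.card_erase_lt_of_mem hu

section Aux

variable (w : V → V → ℝ≥0∞)

lemma bottleneckCost_concat : ∀ (l : List V) (u v : V), l.getLast? = some u →
    bottleneckCost w (l ++ [v]) = max (bottleneckCost w l) (w u v)
  | [], u, v, h => by simp at h
  | [a], u, v, h => by
      simp only [List.getLast?_singleton, Option.some.injEq] at h
      subst h
      simp [bottleneckCost, max_comm]
  | a :: b :: rest, u, v, h => by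
      rw [List.getLast?_cons_cons] at h
      have ih := bottleneckCost_concat (b :: rest) u v h
      simp only [List.cons_append, List.append_eq, bottleneckCost] at ih ⊢
      rw [ih, ← max_assoc]

lemma le_bottleneckCost (d : V → ℝ≥0∞) (hd : ∀ u v, d v ≤ max (d u) (w u v)) :
    ∀ (l : List V) (a v : V), l.head? = some a → l.getLast? = some v →
      d v ≤ max (d a) (bottleneckCost w l)
  | [], a, v, h1, _ => by simp at h1
  | [x], a, v, h1, h2 => by
      simp only [List.head?_cons, Option.some.injEq] at h1
      simp only [List.getLast?_singleton, Option.some.injEq] at h2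
      subst h1; subst h2
      exact le_max_left _ _
  | x :: y :: rest, a, v, h1, h2 => by
      simp only [List.head?_cons, Option.some.injEq] at h1
      subst h1
      rw [List.getLast?_cons_cons] at h2
      have ih := le_bottleneckCost d hd (y :: rest) y v rfl h2
      calc d v ≤ max (d y) (bottleneckCost w (y :: rest)) := ih
        _ ≤ max (max (d x) (w x y)) (bottleneckCost w (y :: rest)) :=
            max_le_max (hd x y) le_rfl
        _ = max (d x) (bottleneckCost w (x :: y :: rest)) := by
            rw [max_assoc]; rfl

/-- The optimal bottleneck cost from `s` to `v`. -/
noncomputable def Dmin (s v : V) : ℝ≥0∞ :=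
  ⨅ (l : List V) (_ : l.head? = some s ∧ l.getLast? = some v), bottleneckCost w l

lemma Dmin_self (s : V) : Dmin w s s = 0 :=
  le_antisymm (le_trans (iInf₂_le [s] ⟨rfl, rfl⟩) (by simp [bottleneckCost])) zero_le

lemma Dmin_edge (s u v : V) : Dmin w s v ≤ max (Dmin w s u) (w u v) := by
  have key : max (Dmin w s u) (w u v)
      = ⨅ (l : List V) (_ : l.head? = some s ∧ l.getLast? = some u),
          max (bottleneckCost w l) (w u v) := by
    rw [Dmin, iInf_sup_eq]
    exact iInf_congr fun l => iInf_sup_eq ..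
  rw [key]
  refine le_iInf₂ fun l hl => ?_
  obtain ⟨hh, hlast⟩ := hl
  have hne : l ≠ [] := by rintro rfl; simp at hh
  have h1 : (l ++ [v]).head? = some s := by
    obtain ⟨x, xs, rfl⟩ := List.exists_cons_of_ne_nil hne
    simpa using hh
  have h2 : (l ++ [v]).getLast? = some v := by
    exact List.getLast?_concat
  calc Dmin w s v ≤ bottleneckCost w (l ++ [v]) := iInf₂_le (l ++ [v]) ⟨h1, h2⟩
    _ = max (bottleneckCost w l) (w u v) := bottleneckCost_concat w l u v hlast

variable [DecidableEq V]

lemma run_unfold (U : Finset V) (d : V → ℝ≥0∞) (h : U.Nonempty) :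
    bottleneckDijkstra w U d =
      bottleneckDijkstra w (U.erase (Finset.exists_min_image U d h).choose)
        (fun v => min (d v)
          (max (d (Finset.exists_min_image U d h).choose)
               (w (Finset.exists_min_image U d h).choose v))) := by
  rw [bottleneckDijkstra, dif_pos h]

lemma run_empty (U : Finset V) (d : V → ℝ≥0∞) (h : ¬ U.Nonempty) :
    bottleneckDijkstra w U d = d := by
  rw [bottleneckDijkstra, dif_neg h]

lemma run_le (U : Finset V) : ∀ (d : V → ℝ≥0∞) (v : V),
    bottleneckDijkstra w U d v ≤ d v := by
  induction U using Finset.strongInduction with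
  | _ U ih =>
    intro d v
    by_cases h : U.Nonempty
    · rw [run_unfold w U d h]
      have hmem := (Finset.exists_min_image U d h).choose_spec.1
      exact le_trans (ih _ (Finset.erase_ssubset hmem) _ v) (min_le_left _ _)
    · rw [run_empty w U d h]

lemma run_stable (U : Finset V) : ∀ (d : V → ℝ≥0∞) (v : V),
    (∀ x ∈ U, d v ≤ d x) → bottleneckDijkstra w U d v = d v := by
  induction U using Finset.strongInduction with
  | _ U ih =>
    intro d v hv
    by_cases h : U.Nonempty
    · rw [run_unfold w U d h]
      set m := (Finset.exists_min_image U d h).choose with hm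
      have hmem := (Finset.exists_min_image U d h).choose_spec.1
      have hvm : d v ≤ d m := hv m hmem
      have hnew : min (d v) (max (d m) (w m v)) = d v :=
        min_eq_left (le_trans hvm (le_max_left _ _))
      have hside : ∀ x ∈ U.erase m,
          min (d v) (max (d m) (w m v)) ≤ min (d x) (max (d m) (w m x)) := by
        intro x hx
        rw [hnew]
        exact le_min (hv x (Finset.mem_of_mem_erase hx)) (le_trans hvm (le_max_left _ _))
      have := ih _ (Finset.erase_ssubset hmem)
        (fun x => min (d x) (max (d m) (w m x))) v hside
      rw [this]
      exact hnew
    · rw [run_empty w U d h]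

lemma run_triangle (U : Finset V) : ∀ (d : V → ℝ≥0∞) (u : V), u ∈ U → ∀ v : V,
    bottleneckDijkstra w U d v ≤ max (bottleneckDijkstra w U d u) (w u v) := by
  induction U using Finset.strongInduction with
  | _ U ih =>
    intro d u hu v
    have h : U.Nonempty := ⟨u, hu⟩
    rw [run_unfold w U d h]
    set m := (Finset.exists_min_image U d h).choose with hm
    have hmem := (Finset.exists_min_image U d h).choose_spec.1
    have hmin := (Finset.exists_min_image U d h).choose_spec.2
    set d' : V → ℝ≥0∞ := fun x => min (d x) (max (d m) (w m x)) with hd'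
    by_cases hum : u = m
    · subst hum
      have hstab : bottleneckDijkstra w (U.erase m) d' m = d' m := by
        refine run_stable w _ d' m ?_
        intro x hx
        have hx' : d m ≤ d' x :=
          le_min (hmin x (Finset.mem_of_mem_erase hx)) (le_max_left _ _)
        exact le_trans (min_le_left _ _) hx'
      have hdu : d' m = d m := min_eq_left (le_max_left _ _)
      calc bottleneckDijkstra w (U.erase m) d' v ≤ d' v := run_le w _ d' v
        _ ≤ max (d m) (w m v) := min_le_right _ _
        _ = max (bottleneckDijkstra w (U.erase m) d' m) (w m v) := by rw [hstab, hdu]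
    · exact ih _ (Finset.erase_ssubset hmem) d' u (Finset.mem_erase.2 ⟨hum, hu⟩) v

lemma run_ge_D (s : V) (U : Finset V) : ∀ (d : V → ℝ≥0∞),
    (∀ x, Dmin w s x ≤ d x) → ∀ v, Dmin w s v ≤ bottleneckDijkstra w U d v := by
  induction U using Finset.strongInduction with
  | _ U ih =>
    intro d hd v
    by_cases h : U.Nonempty
    · rw [run_unfold w U d h]
      set m := (Finset.exists_min_image U d h).choose with hm
      have hmem := (Finset.exists_min_image U d h).choose_spec.1
      refine ih _ (Finset.erase_ssubset hmem) _ ?_ v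
      intro x
      refine le_min (hd x) (le_trans (Dmin_edge w s m x) ?_)
      exact max_le_max (hd m) le_rfl
    · rw [run_empty w U d h]; exact hd v

end Aux

/-- Correctness of Dijkstra's algorithm with the minimax relaxation: on a finite
directed graph, it computes for each vertex the minimum over all paths from the
source of the maximum edge weight along the path. -/
theorem bottleneckDijkstra_correct [Fintype V] [DecidableEq V]
    (w : V → V → ℝ≥0∞) (s : V) (v : V) :
    bottleneckDijkstra w Finset.univ (fun x => if x = s then 0 else ⊤) v
      = ⨅ (l : List V) (_ : l.head? = some s ∧ l.getLast? = some v),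
          bottleneckCost w l := by
  set d0 : V → ℝ≥0∞ := fun x => if x = s then 0 else ⊤ with hd0
  show bottleneckDijkstra w Finset.univ d0 v = Dmin w s v
  set dF := bottleneckDijkstra w Finset.univ d0 with hdF
  refine le_antisymm ?_ ?_
  · have hs : dF s = 0 := by
      refine le_antisymm (le_trans (run_le w _ d0 s) ?_) zero_le
      simp [hd0]
    have htri : ∀ u x : V, dF x ≤ max (dF u) (w u x) := fun u x =>
      run_triangle w Finset.univ d0 u (Finset.mem_univ u) x
    refine le_iInf₂ fun l hl => ?_
    have := le_bottleneckCost w dF htri l s v hl.1 hl.2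
    rw [hs] at this
    simpa using this
  · refine run_ge_D w s Finset.univ d0 ?_ v
    intro x
    by_cases hx : x = s
    · subst hx; simp [hd0, Dmin_self]
    · simp [hd0, hx]
end

section
/- Reverse direction of the reduction: if no subset of {a_1,…,a_K} sums to B, then every feasible consumption schedule (each consumer i consumes exactly once in [i, K+1]) has MSE strictly greater than (1/(K+1))Σ_{k=1}^{K} a_k²/4. -/
open Finset

/-- Reverse direction of the reduction: if no subset of `{a_1, …, a_K}` sums to
`B`, then every feasible consumption schedule has MSE strictly greater than
`(1/(K+1)) Σ_{k=1}^K a_k² / 4`. -/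
theorem mse_reduction_reverse
    (K : ℕ) (hK : 0 < K)
    (a : ℕ → ℕ) (hapos : ∀ i ∈ Finset.Icc 1 K, 0 < a i)
    (hsorted : ∀ i j, 1 ≤ i → i ≤ j → j ≤ K → a j ≤ a i)
    (B : ℕ) (hB : 0 < B)
    (hno : ¬ ∃ V : Finset ℕ, V ⊆ Finset.Icc 1 K ∧ ∑ i ∈ V, a i = B)
    -- a feasible schedule: consumer `i` consumes exactly once, at period
    -- `c i ∈ [i, K+1]`
    (c : ℕ → ℕ) (hc : ∀ i ∈ Finset.Icc 1 K, i ≤ c i ∧ c i ≤ K + 1)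
    (u : ℕ → ℝ)
    (hu : ∀ k, u k = ∑ i ∈ Finset.Icc 1 K, if c i = k then (a i : ℝ) else 0)
    (S : ℕ → ℝ) (hS : ∀ k ∈ Finset.Icc 1 K, S k = (a k : ℝ) / 2) (hSK : S (K + 1) = B) :
    (1 / (K + 1 : ℝ)) * ∑ k ∈ Finset.Icc 1 K, (a k : ℝ) ^ 2 / 4
      < (1 / (K + 1 : ℝ)) * ∑ k ∈ Finset.Icc 1 (K + 1), (u k - S k) ^ 2 := by
  have hpos : (0:ℝ) < 1 / (K + 1 : ℝ) := by positivity
  apply mul_lt_mul_of_pos_left _ hpos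
  rw [Finset.sum_Icc_succ_top (by omega : 1 ≤ K + 1)]
  -- per-period bound for k ≤ K
  have hterm : ∀ k ∈ Finset.Icc 1 K, (a k : ℝ) ^ 2 / 4 ≤ (u k - S k) ^ 2 := by
    intro k hk
    rw [hS k hk, hu k, ← Finset.sum_filter]
    rcases Finset.eq_empty_or_nonempty
        ((Finset.Icc 1 K).filter (fun i => c i = k)) with h | ⟨i, hi⟩
    · rw [h, Finset.sum_empty]
      ring_nf
      nlinarith [sq_nonneg ((a k : ℝ))]
    · obtain ⟨hiK, hik⟩ := Finset.mem_filter.mp hi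
      obtain ⟨hi1, hiK'⟩ := Finset.mem_Icc.mp hiK
      obtain ⟨hk1, hkK⟩ := Finset.mem_Icc.mp hk
      have hile : i ≤ k := le_of_le_of_eq (hc i hiK).1 hik
      have hak : (a k : ℝ) ≤ (a i : ℝ) := by
        exact_mod_cast hsorted i k hi1 hile hkK
      have hsum : (a i : ℝ) ≤ ∑ j ∈ (Finset.Icc 1 K).filter (fun i => c i = k),
          (a j : ℝ) :=
        Finset.single_le_sum (f := fun j => (a j : ℝ)) (fun j _ => by positivity) hi
      nlinarith [hak, hsum]
  have h1 : ∑ k ∈ Finset.Icc 1 K, (a k : ℝ) ^ 2 / 4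
      ≤ ∑ k ∈ Finset.Icc 1 K, (u k - S k) ^ 2 := Finset.sum_le_sum hterm
  -- last period is strictly positive
  have hlast : 0 < (u (K + 1) - S (K + 1)) ^ 2 := by
    have hne : u (K + 1) ≠ S (K + 1) := by
      rw [hu (K + 1), hSK, ← Finset.sum_filter]
      intro heq
      apply hno
      refine ⟨(Finset.Icc 1 K).filter (fun i => c i = K + 1),
        Finset.filter_subset _ _, ?_⟩
      have : ((∑ i ∈ (Finset.Icc 1 K).filter (fun i => c i = K + 1), a i : ℕ) : ℝ)
          = (B : ℝ) := by
        rw [Nat.cast_sum]; exact heq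
      exact_mod_cast this
    have : u (K + 1) - S (K + 1) ≠ 0 := sub_ne_zero_of_ne hne
    positivity
  linarith
end
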